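/- Let p be a prime, let G be an elementary abelian p-group of rank n with n > 2, and let N be a subgroup of G of rank k with 1 ≤ k ≤ n − 2. Then m(G,N) = ∏_{i=1}^{k} (1 − p^{n−1−i}). -/

import Mathlib

/-!
Through `Additive G`, the subgroups of `G` are the subspaces of an `n`-dimensional `𝔽_p`-vector
space `V`. Weisner's theorem for a line `L`, together with the count `p ^ (d - 1)` of complements
of `L` in a `d`-dimensional space, gives `μ(X, V) = (-1) ^ c p ^ (c choose 2)` with `c` the
codimension of `X`. For a line `L ≤ N`, group the `X` with `X + N = V` according to `Y = X + L`:
the fibre consists of `Y` and the complements of `L` in `Y`, and `p` times its contribution to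
`S(V, N) = Σ_{X + N = V} |X| μ(X, V)` is `(p - p ^ (n - 1)) |Y| μ(Y, V)`. As `Y ↦ Y / L`
matches these `Y` with the subspaces of `V / L` supplementing `N / L`, this yields
`S(V, N) = (p - p ^ (n - 1)) S(V / L, N / L)`; with `S(V, 0) = |V|` the induction on `dim N`
closes.
-/

open scoped Classical

/-- The Möbius function of the lattice of subgroups of a finite group,
with values in `ℚ`. -/
noncomputable def subgroupMoebius (G : Type*) [Group G] [Finite G]
    (A B : Subgroup G) : ℚ :=
  letI : Fintype (Subgroup G) := Fintype.ofFinite _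
  letI : LocallyFiniteOrder (Subgroup G) := Fintype.toLocallyFiniteOrder
  IncidenceAlgebra.mu ℚ A B

/-- The constant `m°(G,S,N) = Σ μ(V,G)`, the sum running over all subgroups `V`
of `G` with `S ≤ V ≤ G` and `VN = G`. -/
noncomputable def mCirc (G : Type*) [Group G] [Finite G] (S N : Subgroup G) : ℚ :=
  letI : Fintype (Subgroup G) := Fintype.ofFinite _
  ∑ V ∈ Finset.univ.filter (fun V : Subgroup G => S ≤ V ∧ V ⊔ N = ⊤),
    subgroupMoebius G V ⊤

/-- The constant `m(G,S,N) = (|N_G(SN)| / (|SN|·|N_G(S)|)) · Σ |U| μ(U,S) μ(V,G)`,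
the sum running over pairs `(U,V)` with `U ≤ S ≤ V ≤ G`, `VN = G`, `UN = SN`. -/
noncomputable def mSlice (G : Type*) [Group G] [Finite G] (S N : Subgroup G) : ℚ :=
  letI : Fintype (Subgroup G) := Fintype.ofFinite _
  ((Nat.card (Subgroup.normalizer ((S ⊔ N : Subgroup G) : Set G)) : ℚ) /
      ((Nat.card (S ⊔ N : Subgroup G) : ℚ) * (Nat.card (Subgroup.normalizer (S : Set G)) : ℚ))) *
    ∑ U ∈ Finset.univ.filter (fun U : Subgroup G => U ≤ S ∧ U ⊔ N = S ⊔ N),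
      ∑ V ∈ Finset.univ.filter (fun V : Subgroup G => S ≤ V ∧ V ⊔ N = ⊤),
        (Nat.card U : ℚ) * subgroupMoebius G U S * subgroupMoebius G V ⊤

/-- Bouc's constant `m(G,N) = (1/|G|) Σ_{X ≤ G, XN = G} |X| μ(X,G)`. -/
noncomputable def mBouc (G : Type*) [Group G] [Finite G] (N : Subgroup G) : ℚ :=
  letI : Fintype (Subgroup G) := Fintype.ofFinite _
  (1 / (Nat.card G : ℚ)) *
    ∑ X ∈ Finset.univ.filter (fun X : Subgroup G => X ⊔ N = ⊤),
      (Nat.card X : ℚ) * subgroupMoebius G X ⊤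

open Finset IncidenceAlgebra Module

namespace IncidenceAlgebra

variable {𝕜 α β : Type*} [Ring 𝕜]

section OrdConnected

variable [PartialOrder α] [PartialOrder β] [LocallyFiniteOrder α] [LocallyFiniteOrder β]
  [DecidableEq α] [DecidableEq β]

theorem mu_map_of_ordConnected (e : α ↪o β) (he : (Set.range e).OrdConnected) (a b : α) :
    mu 𝕜 (e a) (e b) = mu 𝕜 a b := by
  let ν : IncidenceAlgebra 𝕜 α :=
    ⟨fun a b ↦ mu 𝕜 (e a) (e b),
      fun _ _ hab ↦ apply_eq_zero_of_not_le (by simpa using hab) _⟩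
  have hν : ν * zeta 𝕜 = 1 := by
    ext a b
    have hIcc : (Icc a b).map e.toEmbedding = Icc (e a) (e b) := by
      rw [← Finset.coe_inj, coe_map, coe_Icc, coe_Icc]
      exact e.image_Icc he a b
    calc (ν * zeta 𝕜 : IncidenceAlgebra 𝕜 α) a b
        = ∑ x ∈ Icc a b, mu 𝕜 (e a) (e x) := by
          rw [mul_apply]
          exact sum_congr rfl fun x hx ↦ by simp [ν, (mem_Icc.1 hx).2]
      _ = ∑ y ∈ Icc (e a) (e b), mu 𝕜 (e a) y := by rw [← hIcc, sum_map]; rfl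
      _ = (1 : IncidenceAlgebra 𝕜 α) a b := by simp [sum_Icc_mu_right, one_apply]
  calc mu 𝕜 (e a) (e b) = ν a b := rfl
    _ = (ν * (zeta 𝕜 * mu 𝕜) : IncidenceAlgebra 𝕜 α) a b := by rw [zeta_mul_mu, mul_one]
    _ = mu 𝕜 a b := by rw [← mul_assoc, hν, one_mul]

theorem mu_map_orderIso (e : α ≃o β) (a b : α) : mu 𝕜 (e a) (e b) = mu 𝕜 a b :=
  mu_map_of_ordConnected e.toOrderEmbedding (Set.ordConnected_range e) a b

end OrdConnected

/-- Weisner's theorem. -/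
theorem sum_mu_bot_of_sup_eq_top [Lattice α] [BoundedOrder α] [Fintype α] [LocallyFiniteOrder α]
    [DecidableEq α] {a : α} (ha : a ≠ ⊥) :
    ∑ x ∈ univ.filter (· ⊔ a = ⊤), mu 𝕜 ⊥ x = 0 := by
  have h_indicator (b : α) :
      (if b = ⊤ then (1 : 𝕜) else 0) = ∑ y, if b ≤ y then mu 𝕜 y ⊤ else 0 := by
    rw [← sum_Icc_mu_left b ⊤, ← sum_filter]
    congr 1
    ext y
    simp
  calc ∑ x ∈ univ.filter (· ⊔ a = ⊤), mu 𝕜 ⊥ x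
      = ∑ x, ∑ y, if x ⊔ a ≤ y then mu 𝕜 ⊥ x * mu 𝕜 y ⊤ else 0 := by
        rw [sum_filter]
        refine sum_congr rfl fun x _ ↦ ?_
        rw [← mul_boole, h_indicator, mul_sum]
        simp_rw [mul_ite, mul_zero]
    _ = ∑ y, if a ≤ y then (∑ x ∈ Icc ⊥ y, mu 𝕜 ⊥ x) * mu 𝕜 y ⊤ else 0 := by
        rw [sum_comm]
        refine sum_congr rfl fun y _ ↦ ?_
        split_ifs with hay
        · rw [sum_mul, ← sum_filter]
          congr 1
          ext x
          simp [hay]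
        · exact sum_eq_zero fun x _ ↦ if_neg fun h ↦ hay (le_sup_right.trans h)
    _ = 0 := sum_eq_zero fun y _ ↦ by
        rw [sum_Icc_mu_right]
        split_ifs with hay hy
        · exact absurd (le_bot_iff.1 (hy ▸ hay)) ha
        · simp
        · rfl

end IncidenceAlgebra

section Lattice

variable {α : Type*}

theorem IsAtom.sup_eq_and_ne_iff [Lattice α] [OrderBot α] {a x y : α} (ha : IsAtom a) :
    x ⊔ a = y ∧ x ≠ y ↔ Disjoint a x ∧ a ⊔ x = y := by
  constructor
  · rintro ⟨rfl, hne⟩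
    exact ⟨ha.not_le_iff_disjoint.1 fun h ↦ hne (sup_eq_left.2 h).symm, sup_comm a x⟩
  · rintro ⟨hd, rfl⟩
    exact ⟨sup_comm x a, fun h ↦ ha.not_le_iff_disjoint.2 hd (h ▸ le_sup_left)⟩

theorem Finset.sum_filter_sup_eq {M : Type*} [AddCommMonoid M] [Lattice α] [Fintype α]
    [DecidableEq α] (f : α → M) {a y : α} (hay : a ≤ y) :
    ∑ x ∈ univ.filter (· ⊔ a = y), f x
      = f y + ∑ x ∈ univ.filter (fun x ↦ x ⊔ a = y ∧ x ≠ y), f x := by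
  have hy : y ∈ univ.filter (· ⊔ a = y) := by simpa using hay
  rw [← add_sum_erase _ _ hy]
  congr 2
  ext x
  simp [and_comm]

end Lattice

noncomputable local instance (R M : Type*) [Semiring R] [AddCommMonoid M] [Module R M]
    [Finite M] : Fintype (Submodule R M) :=
  Fintype.ofFinite _

noncomputable local instance (R M : Type*) [Semiring R] [AddCommMonoid M] [Module R M]
    [Finite M] : LocallyFiniteOrder (Submodule R M) :=
  Fintype.toLocallyFiniteOrder

local instance (R M : Type*) [Ring R] [AddCommGroup M] [Module R M] [Finite M]
    (X : Submodule R M) : Finite (M ⧸ X) :=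
  Finite.of_surjective _ X.mkQ_surjective

namespace Submodule

section Ring

variable {𝕜 R M : Type*} [Ring 𝕜] [Ring R] [AddCommGroup M] [Module R M]

theorem eq_top_of_map_mkQ_eq_top {L Z : Submodule R M} (hLZ : L ≤ Z) (h : Z.map L.mkQ = ⊤) :
    Z = ⊤ := by
  rw [← sup_eq_right.2 hLZ, ← comap_map_mkQ, h, comap_top]

variable [Finite M]

theorem mu_map_subtype (X : Submodule R M) (A B : Submodule R X) :
    mu 𝕜 (A.map X.subtype) (B.map X.subtype) = mu 𝕜 A B := by
  have hrange : Set.range (MapSubtype.orderEmbedding X) = Set.Iic X := by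
    ext Y
    refine ⟨?_, fun hY ↦ ⟨Y.comap X.subtype, ?_⟩⟩
    · rintro ⟨Z, rfl⟩
      exact map_subtype_le X Z
    · simpa [map_comap_subtype] using hY
  exact mu_map_of_ordConnected (𝕜 := 𝕜) _ (hrange ▸ Set.ordConnected_Iic) A B

theorem mu_comap_mkQ (X : Submodule R M) (A B : Submodule R (M ⧸ X)) :
    mu 𝕜 (A.comap X.mkQ) (B.comap X.mkQ) = mu 𝕜 A B := by
  have hrange : Set.range (comapMkQOrderEmbedding X) = Set.Ici X := by
    ext Y
    refine ⟨?_, fun hY ↦ ⟨Y.map X.mkQ, ?_⟩⟩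
    · rintro ⟨Z, rfl⟩
      exact le_comap_mkQ X Z
    · simpa [comap_map_mkQ] using hY
  exact mu_map_of_ordConnected (𝕜 := 𝕜) _ (hrange ▸ Set.ordConnected_Ici) A B

/-- `|M| · m(M, N)`: Bouc's constant without its factor `1 / |M|`. -/
noncomputable def supplementSum (N : Submodule R M) : ℚ :=
  ∑ X ∈ univ.filter (· ⊔ N = ⊤), (Nat.card X : ℚ) * mu ℚ X ⊤

end Ring

section FiniteDimensional

variable {K V : Type*} [Field K] [AddCommGroup V] [Module K V] [FiniteDimensional K V]

theorem finrank_comap_mkQ (L : Submodule K V) (Y : Submodule K (V ⧸ L)) :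
    finrank K (Y.comap L.mkQ) = finrank K Y + finrank K L := by
  have h := LinearMap.finrank_range_add_finrank_ker (L.mkQ ∘ₗ (Y.comap L.mkQ).subtype)
  rwa [LinearMap.range_comp, range_subtype, map_comap_eq_of_surjective L.mkQ_surjective,
    LinearMap.ker_comp, ker_mkQ, (comapSubtypeEquivOfLe (le_comap_mkQ L Y)).finrank_eq,
    eq_comm] at h

theorem finrank_add_one_of_sup_eq_of_ne {L X Y : Submodule K V} (hL : IsAtom L)
    (h : X ⊔ L = Y) (hne : X ≠ Y) : finrank K X + 1 = finrank K Y := by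
  have hd : Disjoint L X := (hL.sup_eq_and_ne_iff.1 ⟨h, hne⟩).1
  have := finrank_sup_add_finrank_inf_eq X L
  rw [h, inf_comm, disjoint_iff.1 hd, finrank_bot, isAtom_iff_finrank_eq_one.1 hL] at this
  omega

end FiniteDimensional

variable {K V : Type*} [Field K] [AddCommGroup V] [Module K V] [Finite V]

theorem natCard_isCompl (L : Submodule K V) :
    Nat.card {X // IsCompl L X} = Nat.card K ^ (finrank K (V ⧸ L) * finrank K L) := by
  obtain ⟨f₀, hf₀⟩ : ∃ f₀ : V →ₗ[K] L, ∀ x : L, f₀ x = x :=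
    let ⟨X, hX⟩ := L.exists_isCompl
    ⟨_, (L.isComplEquivProj ⟨X, hX⟩).2⟩
  -- Complements of `L` are the kernels of projections onto `L`,
  -- which form a torsor under `V ⧸ L →ₗ[K] L`.
  let liftQEquiv : {g : V →ₗ[K] L // ∀ x : L, g x = 0} ≃ (V ⧸ L →ₗ[K] L) :=
    { toFun g := L.liftQ g.1 fun x hx ↦ g.2 ⟨x, hx⟩
      invFun h := ⟨h ∘ₗ L.mkQ, fun x ↦ by simp [(Quotient.mk_eq_zero L).2 x.2]⟩
      left_inv g := Subtype.ext (L.liftQ_mkQ _ _)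
      right_inv h := L.linearMap_qext (L.liftQ_mkQ _ _) }
  calc Nat.card {X // IsCompl L X} = Nat.card {f : V →ₗ[K] L // ∀ x : L, f x = x} :=
        Nat.card_congr L.isComplEquivProj
    _ = Nat.card {g : V →ₗ[K] L // ∀ x : L, g x = 0} :=
        Nat.card_congr <| (Equiv.subRight f₀).subtypeEquiv fun f ↦ by simp [sub_eq_zero, hf₀]
    _ = Nat.card (V ⧸ L →ₗ[K] L) := Nat.card_congr liftQEquiv
    _ = _ := by rw [natCard_eq_pow_finrank (K := K), finrank_linearMap (S := K)]

theorem card_filter_sup_eq_ne {L Y : Submodule K V} (hL : IsAtom L) (hLY : L ≤ Y) :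
    #(univ.filter fun X : Submodule K V ↦ X ⊔ L = Y ∧ X ≠ Y)
      = Nat.card K ^ (finrank K Y - 1) := by
  set L' := Y.mapIic.symm ⟨L, hLY⟩
  have hL' : finrank K L' = 1 :=
    isAtom_iff_finrank_eq_one.1 ((Y.mapIic.symm.isAtom_iff _).2 (hL.Iic hLY))
  calc #(univ.filter fun X : Submodule K V ↦ X ⊔ L = Y ∧ X ≠ Y)
      = Nat.card {X : Submodule K V // X ⊔ L = Y ∧ X ≠ Y} := by
        rw [Nat.card_eq_fintype_card, Fintype.card_subtype]
    _ = Nat.card {X : Set.Iic Y // IsCompl (⟨L, hLY⟩ : Set.Iic Y) X} := by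
        have h_Iic {X : Submodule K V} (h : X ⊔ L = Y ∧ X ≠ Y) : X ∈ Set.Iic Y :=
          Set.mem_Iic.2 (h.1 ▸ le_sup_left)
        refine Nat.card_congr ((Equiv.subtypeSubtypeEquivSubtype h_Iic).symm.trans
          (Equiv.subtypeEquivRight fun X ↦ ?_))
        rw [Set.Iic.isCompl_iff, ← hL.sup_eq_and_ne_iff]
    _ = Nat.card {X : Submodule K Y // IsCompl L' X} := by
        refine (Nat.card_congr (Y.mapIic.toEquiv.subtypeEquiv fun X ↦ ?_)).symm
        rw [Y.mapIic.isCompl_iff, OrderIso.apply_symm_apply]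
        rfl
    _ = _ := by rw [natCard_isCompl, finrank_quotient, hL', mul_one]

theorem mu_bot_top :
    mu ℚ (⊥ : Submodule K V) ⊤
      = (-1) ^ finrank K V * (Nat.card K : ℚ) ^ (finrank K V).choose 2 := by
  obtain ⟨n, hn⟩ : ∃ n, finrank K V = n := ⟨_, rfl⟩
  induction n generalizing V with
  | zero =>
    have : Subsingleton V := finrank_zero_iff.1 hn
    simp [Subsingleton.elim (⊥ : Submodule K V) ⊤, hn]
  | succ n ih =>
    have : Nontrivial V := finrank_pos_iff (R := K).1 (by omega)
    obtain ⟨L, hL⟩ := IsAtomic.exists_atom (Submodule K V)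
    have h_weisner := sum_mu_bot_of_sup_eq_top (𝕜 := ℚ) hL.ne_bot
    have h_coatom : ∀ X ∈ univ.filter fun X : Submodule K V ↦ X ⊔ L = ⊤ ∧ X ≠ ⊤,
        mu ℚ ⊥ X = (-1) ^ n * (Nat.card K : ℚ) ^ n.choose 2 := by
      intro X hX
      obtain ⟨hXL, hXtop⟩ := (mem_filter.1 hX).2
      have hXn := finrank_add_one_of_sup_eq_of_ne hL hXL hXtop
      have h_restrict := mu_map_subtype (𝕜 := ℚ) X ⊥ ⊤
      rw [map_bot, map_subtype_top] at h_restrict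
      have hX : finrank K X = n := by rw [finrank_top] at hXn; omega
      rw [h_restrict, ih hX, hX]
    rw [sum_filter_sup_eq _ le_top, sum_congr rfl h_coatom, sum_const,
      card_filter_sup_eq_ne hL le_top, finrank_top, hn, Nat.add_sub_cancel,
      nsmul_eq_mul] at h_weisner
    rw [hn, Nat.choose_succ_succ', Nat.choose_one_right, pow_add, pow_succ]
    push_cast at h_weisner
    linear_combination h_weisner

theorem mu_top (X : Submodule K V) :
    mu ℚ X ⊤ = (-1) ^ (finrank K V - finrank K X) *
      (Nat.card K : ℚ) ^ (finrank K V - finrank K X).choose 2 := by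
  have h_quot := mu_comap_mkQ (𝕜 := ℚ) X ⊥ ⊤
  rw [comap_bot, ker_mkQ, comap_top] at h_quot
  rw [h_quot, mu_bot_top, finrank_quotient]

theorem natCard_mul_sum_filter_sup_eq {L Y : Submodule K V} (hL : IsAtom L) (hLY : L ≤ Y) :
    (Nat.card K : ℚ) * ∑ X ∈ univ.filter (· ⊔ L = Y), (Nat.card X : ℚ) * mu ℚ X ⊤
      = (Nat.card K - Nat.card K ^ (finrank K V - 1)) * ((Nat.card Y : ℚ) * mu ℚ Y ⊤) := by
  obtain ⟨d, hd⟩ : ∃ d, finrank K Y = d + 1 :=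
    ⟨finrank K Y - 1, by
      have := finrank_mono hLY
      rw [isAtom_iff_finrank_eq_one.1 hL] at this
      omega⟩
  obtain ⟨c, hc⟩ : ∃ c, finrank K V = d + 1 + c :=
    ⟨finrank K V - finrank K Y, by have := finrank_le Y; omega⟩
  have h_compl : ∀ X ∈ univ.filter fun X : Submodule K V ↦ X ⊔ L = Y ∧ X ≠ Y,
      (Nat.card X : ℚ) * mu ℚ X ⊤ =
        (Nat.card K : ℚ) ^ d * ((-1) ^ (c + 1) * (Nat.card K : ℚ) ^ (c + 1).choose 2) := by
    intro X hX
    obtain ⟨hXL, hXY⟩ := (mem_filter.1 hX).2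
    have hX := finrank_add_one_of_sup_eq_of_ne hL hXL hXY
    rw [mu_top, natCard_eq_pow_finrank (K := K), show finrank K X = d by omega,
      show finrank K V - d = c + 1 by omega]
    push_cast
    rfl
  rw [sum_filter_sup_eq _ hLY, sum_congr rfl h_compl, sum_const, card_filter_sup_eq_ne hL hLY,
    mu_top, natCard_eq_pow_finrank (K := K) (V := Y), hd, hc, nsmul_eq_mul,
    show d + 1 + c - (d + 1) = c by omega, show d + 1 + c - 1 = d + c by omega,
    Nat.choose_succ_succ', Nat.choose_one_right]
  push_cast
  ring

theorem natCard_mul_supplementSum_map_mkQ (L N : Submodule K V) :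
    (Nat.card L : ℚ) * supplementSum (N.map L.mkQ)
      = ∑ Y ∈ univ.filter (fun Y : Submodule K V ↦ L ≤ Y ∧ Y ⊔ N = ⊤),
          (Nat.card Y : ℚ) * mu ℚ Y ⊤ := by
  rw [supplementSum, mul_sum]
  refine sum_nbij' (comap L.mkQ) (map L.mkQ) (fun Y hY ↦ ?_) (fun Y hY ↦ ?_) (fun Y _ ↦ ?_)
    (fun Y hY ↦ ?_) (fun Y _ ↦ ?_)
  · have hY : Y ⊔ map L.mkQ N = ⊤ := (mem_filter.1 hY).2
    refine mem_filter.2 ⟨mem_univ _, le_comap_mkQ L Y, eq_top_of_map_mkQ_eq_top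
      ((le_comap_mkQ L Y).trans le_sup_left) ?_⟩
    rwa [map_sup, map_comap_eq_of_surjective L.mkQ_surjective]
  · obtain ⟨-, -, hY⟩ := mem_filter.1 hY
    rw [mem_filter, ← map_sup, hY, map_top, range_mkQ]
    exact ⟨mem_univ _, rfl⟩
  · exact map_comap_eq_of_surjective L.mkQ_surjective Y
  · rw [comap_map_mkQ, sup_eq_right.2 (mem_filter.1 hY).2.1]
  · have h_mu := mu_comap_mkQ (𝕜 := ℚ) L Y ⊤
    rw [comap_top] at h_mu
    rw [h_mu, natCard_eq_pow_finrank (K := K) (V := Y),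
      natCard_eq_pow_finrank (K := K) (V := L),
      natCard_eq_pow_finrank (K := K) (V := Y.comap L.mkQ), finrank_comap_mkQ]
    push_cast
    ring

variable [Finite K]

theorem supplementSum_eq_mul_supplementSum_map_mkQ {L N : Submodule K V} (hL : IsAtom L)
    (hLN : L ≤ N) :
    supplementSum N
      = (Nat.card K - Nat.card K ^ (finrank K V - 1)) * supplementSum (N.map L.mkQ) := by
  have h_sup (X : Submodule K V) : X ⊔ L ⊔ N = X ⊔ N := by rw [sup_assoc, sup_eq_right.2 hLN]
  have hq : (Nat.card K : ℚ) ≠ 0 := by exact_mod_cast Nat.card_pos.ne'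
  set T := univ.filter fun Y : Submodule K V ↦ L ≤ Y ∧ Y ⊔ N = ⊤
  have h_fiber : supplementSum N
      = ∑ Y ∈ T, ∑ X ∈ univ.filter (· ⊔ L = Y), (Nat.card X : ℚ) * mu ℚ X ⊤ := by
    rw [supplementSum, ← sum_fiberwise_of_maps_to (g := (· ⊔ L)) (t := T)]
    · refine sum_congr rfl fun Y hY ↦ sum_congr ?_ fun _ _ ↦ rfl
      ext X
      simp only [filter_filter, mem_filter, mem_univ, true_and, and_iff_right_iff_imp]
      rintro rfl
      rw [← h_sup]
      exact (mem_filter.1 hY).2.2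
    · intro X hX
      simpa [T, h_sup] using (mem_filter.1 hX).2
  apply mul_left_cancel₀ hq
  rw [h_fiber, mul_sum,
    sum_congr rfl fun Y hY ↦ natCard_mul_sum_filter_sup_eq hL (mem_filter.1 hY).2.1,
    ← mul_sum, ← natCard_mul_supplementSum_map_mkQ, natCard_eq_pow_finrank (K := K) (V := L),
    isAtom_iff_finrank_eq_one.1 hL, pow_one]
  ring

theorem supplementSum_eq (N : Submodule K V) :
    supplementSum N = (Nat.card K : ℚ) ^ (finrank K V - finrank K N) *
      ∏ j ∈ range (finrank K N),
        ((Nat.card K : ℚ) - (Nat.card K : ℚ) ^ (finrank K V - 1 - j)) := by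
  obtain ⟨k, hk⟩ : ∃ k, finrank K N = k := ⟨_, rfl⟩
  induction k generalizing V with
  | zero =>
    obtain rfl : N = ⊥ := finrank_eq_zero.1 hk
    have h_filter : univ.filter (· ⊔ (⊥ : Submodule K V) = ⊤) = {⊤} := by ext; simp
    rw [supplementSum, h_filter, sum_singleton, mu_self,
      natCard_eq_pow_finrank (K := K) (V := (⊤ : Submodule K V)), finrank_top]
    simp
  | succ k ih =>
    obtain ⟨L, hL, hLN⟩ := (eq_bot_or_exists_atom_le N).resolve_left
      fun h ↦ by subst h; simp at hk
    have hL1 := isAtom_iff_finrank_eq_one.1 hL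
    have hk' : finrank K (N.map L.mkQ) = k := by
      have := finrank_comap_mkQ L (N.map L.mkQ)
      rw [comap_map_mkQ, sup_eq_right.2 hLN, hk, hL1] at this
      omega
    rw [supplementSum_eq_mul_supplementSum_map_mkQ hL hLN, ih _ hk', hk, hk', finrank_quotient,
      hL1, prod_range_succ']
    have h_le : k + 1 ≤ finrank K V := hk ▸ finrank_le N
    rw [show finrank K V - 1 - k = finrank K V - (k + 1) by omega, Nat.sub_zero]
    simp only [show ∀ j, finrank K V - 1 - 1 - j = finrank K V - 1 - (j + 1) by omega]
    ring

end Submodule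

theorem inv_pow_mul_prod_range_eq_prod_Icc {q : ℚ} (hq : q ≠ 0) {n k : ℕ} (hk : k ≤ n - 1) :
    (q ^ n)⁻¹ * (q ^ (n - k) * ∏ j ∈ range k, (q - q ^ (n - 1 - j)))
      = ∏ i ∈ Icc 1 k, (1 - q ^ (n - 1 - i)) := by
  have h_factor : ∀ j ∈ range k, q - q ^ (n - 1 - j) = q * (1 - q ^ (n - 1 - (j + 1))) := by
    intro j hj
    rw [mem_range] at hj
    rw [mul_sub, mul_one, ← pow_succ']
    congr 2
    omega
  have h_Icc : Ico (0 + 1) (k + 1) = Icc 1 k := by ext; simp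
  rw [prod_congr rfl h_factor, prod_mul_distrib, prod_const, card_range, range_eq_Ico,
    prod_Ico_add' (fun i ↦ 1 - q ^ (n - 1 - i)), h_Icc, ← mul_assoc (q ^ (n - k)), ← pow_add,
    show n - k + k = n by omega, inv_mul_cancel_left₀ (pow_ne_zero _ hq)]

theorem finrank_eq_of_natCard_eq_pow {K V : Type*} [Field K] [Finite K] [AddCommGroup V]
    [Module K V] [Finite V] {m : ℕ} (h : Nat.card V = Nat.card K ^ m) : finrank K V = m :=
  Nat.pow_right_injective Finite.one_lt_card (natCard_eq_pow_finrank (K := K) (V := V) ▸ h)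

noncomputable local instance (G : Type*) [Group G] [Finite G] : Fintype (Subgroup G) :=
  Fintype.ofFinite _

noncomputable local instance (G : Type*) [Group G] [Finite G] :
    LocallyFiniteOrder (Subgroup G) :=
  Fintype.toLocallyFiniteOrder

theorem mBouc_eq_supplementSum {G : Type*} [CommGroup G] [Finite G] {p : ℕ}
    [Module (ZMod p) (Additive G)] (N : Subgroup G) :
    mBouc G N = (Nat.card G : ℚ)⁻¹ *
      Submodule.supplementSum (AddSubgroup.toZModSubmodule p N.toAddSubgroup) := by
  let E : Subgroup G ≃o Submodule (ZMod p) (Additive G) :=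
    Subgroup.toAddSubgroup.trans (AddSubgroup.toZModSubmodule p)
  rw [mBouc, one_div, Submodule.supplementSum]
  congr 1
  refine sum_equiv E.toEquiv (fun X ↦ ?_) (fun X _ ↦ ?_)
  · simp only [mem_filter, mem_univ, true_and]
    exact (E.injective.eq_iff' E.map_top).symm.trans (by rw [E.map_sup]; rfl)
  · rw [subgroupMoebius, ← E.map_top]
    exact congrArg _ (mu_map_orderIso E X ⊤).symm

theorem mBouc_elementaryAbelian_general (p n k : ℕ) (hp : p.Prime) (hk2 : k ≤ n - 2)
    (G : Type*) [CommGroup G] [Finite G] (hexp : ∀ g : G, g ^ p = 1)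
    (hcard : Nat.card G = p ^ n) (N : Subgroup G) (hN : Nat.card N = p ^ k) :
    mBouc G N = ∏ i ∈ Finset.Icc 1 k, (1 - (p : ℚ) ^ (n - 1 - i)) := by
  have : Fact p.Prime := ⟨hp⟩
  have : Module (ZMod p) (Additive G) :=
    AddCommGroup.zmodModule fun g ↦ congrArg Additive.ofMul (hexp g.toMul)
  have hn : finrank (ZMod p) (Additive G) = n :=
    finrank_eq_of_natCard_eq_pow (by rw [Nat.card_zmod]; exact hcard)
  let N' : Submodule (ZMod p) (Additive G) := AddSubgroup.toZModSubmodule p N.toAddSubgroup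
  have hk : finrank (ZMod p) N' = k :=
    finrank_eq_of_natCard_eq_pow (by rw [Nat.card_zmod]; exact hN)
  rw [mBouc_eq_supplementSum (p := p), Submodule.supplementSum_eq, hn, hk, Nat.card_zmod, hcard]
  push_cast
  exact inv_pow_mul_prod_range_eq_prod_Icc (by exact_mod_cast hp.ne_zero) (by omega)

/-- For an elementary abelian p-group G of rank n > 2 and a subgroup N of rank k
with 1 ≤ k ≤ n − 2, we have m(G,N) = ∏_{i=1}^{k} (1 − p^{n−1−i}). -/
theorem mBouc_elementaryAbelian (p n k : ℕ) (hp : p.Prime) (hn : 2 < n)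
    (hk1 : 1 ≤ k) (hk2 : k ≤ n - 2)
    (G : Type*) [CommGroup G] [Finite G] (hexp : ∀ g : G, g ^ p = 1)
    (hcard : Nat.card G = p ^ n) (N : Subgroup G) (hN : Nat.card N = p ^ k) :
    mBouc G N = ∏ i ∈ Finset.Icc 1 k, (1 - (p : ℚ) ^ (n - 1 - i)) :=
  mBouc_elementaryAbelian_general p n k hp hk2 G hexp hcard N hN
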